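/- Let X and Y be compact ordered spaces and let f : X → Y be a continuous monotone map. Then f is surjective if and only if for all continuous monotone functions g₁, g₂ : Y → [0,1], g₁ ∘ f = g₂ ∘ f implies g₁ = g₂. (This is the concrete content of the statement that the epimorphisms in the category of compact ordered spaces are exactly the continuous monotone surjections.) -/

import Mathlib

/-!
A surjection is clearly an epimorphism. Conversely, if `y ∉ f(X)`, the image `M` is closed, and
Nachbin's ordered Urysohn lemma provides continuous monotone `ψ, θ : Y → [0,1]` with `ψ y = 0`,
`ψ = 1` on `M ∩ ↑y`, `θ = 0` on `M ∩ {ψ ≤ 1/2}` and `θ y = 1`. Then `ψ` and `max ψ (θ / 2)` agree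
on `M` but not at `y`.

The ordered Urysohn lemma comes out of Mathlib's Urysohn construction `Urysohns.CU` by requiring
all the open sets of the construction to be lower sets: every approximation is then monotone.
-/

open Set

section Closures

variable {α : Type*} [TopologicalSpace α] [Preorder α] [OrderClosedTopology α]

theorem IsCompact.isClosed_upperClosure {K : Set α} (hK : IsCompact K) :
    IsClosed (upperClosure K : Set α) := by
  have : CompactSpace K := isCompact_iff_compactSpace.1 hK
  have hK_image : (upperClosure K : Set α) = Prod.snd '' {p : K × α | (p.1 : α) ≤ p.2} := by
    ext a
    simp [mem_upperClosure]
  rw [hK_image]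
  exact isClosedMap_snd_of_compactSpace _
    (isClosed_le (continuous_subtype_val.comp continuous_fst) continuous_snd)

theorem IsCompact.isClosed_lowerClosure {K : Set α} (hK : IsCompact K) :
    IsClosed (lowerClosure K : Set α) :=
  IsCompact.isClosed_upperClosure (α := αᵒᵈ) hK

end Closures

namespace Urysohns.CU

variable {X : Type*} [TopologicalSpace X] [Preorder X]

theorem monotone_approx (c : CU fun _ u : Set X => IsLowerSet u) (n : ℕ) :
    Monotone (c.approx n) := by
  induction n generalizing c with
  | zero =>
    intro a b hab
    by_cases ha : a ∈ c.Uᶜ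
    · have hb : b ∈ c.Uᶜ := c.P_C_U.compl hab ha
      simp [approx, indicator_of_mem ha, indicator_of_mem hb]
    · simp only [approx, indicator_of_notMem ha]
      exact indicator_nonneg (fun _ _ => zero_le_one) _
  | succ n ih => exact fun _ _ hab => midpoint_le_midpoint (ih c.left hab) (ih c.right hab)

theorem monotone_lim (c : CU fun _ u : Set X => IsLowerSet u) : Monotone c.lim :=
  fun _ b hab => ciSup_le fun n => (c.monotone_approx n hab).trans (c.approx_le_lim b n)

end Urysohns.CU

section CompactPospace

variable {X : Type*} [TopologicalSpace X] [CompactSpace X] [PartialOrder X]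
  [OrderClosedTopology X]

theorem exists_isOpen_isLowerSet_closure_subset {s u : Set X} (hs : IsClosed s) (hu : IsOpen u)
    (hu_lower : IsLowerSet u) (hsu : s ⊆ u) :
    ∃ v, IsOpen v ∧ IsLowerSet v ∧ s ⊆ v ∧ closure v ⊆ u := by
  obtain ⟨w, hw, hsw, hwu⟩ := normal_exists_closure_subset hs.isCompact.isClosed_lowerClosure hu
    (lowerClosure_min hsu hu_lower)
  -- the largest lower set contained in `w`
  refine ⟨(upperClosure wᶜ : Set X)ᶜ,
    hw.isClosed_compl.isCompact.isClosed_upperClosure.isOpen_compl, (upperClosure wᶜ).upper.compl,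
    ?_, ?_⟩
  · rintro a ha ⟨b, hb, hba⟩
    exact hb (hsw (mem_lowerClosure.2 ⟨a, ha, hba⟩))
  · refine (closure_mono fun a ha => ?_).trans hwu
    by_contra hwa
    exact ha (subset_upperClosure hwa)

theorem exists_continuous_monotone_zero_one_of_isClosed {s t : Set X} (hs : IsClosed s)
    (ht : IsClosed t) (hst : ∀ a ∈ s, ∀ b ∈ t, ¬b ≤ a) :
    ∃ f : C(X, ℝ), Monotone f ∧ EqOn f 0 s ∧ EqOn f 1 t ∧ ∀ x, f x ∈ Icc (0 : ℝ) 1 := by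
  let c : Urysohns.CU fun _ u : Set X => IsLowerSet u :=
    { C := s
      U := (upperClosure t : Set X)ᶜ
      P_C_U := (upperClosure t).upper.compl
      closed_C := hs
      open_U := ht.isCompact.isClosed_upperClosure.isOpen_compl
      subset := fun a ha ⟨b, hb, hba⟩ => hst a ha b hb hba
      hP := fun hc hu_lower hu hcu => by
        obtain ⟨v, hv, hv_lower, hcv, hvu⟩ :=
          exists_isOpen_isLowerSet_closure_subset hc hu hu_lower hcu
        exact ⟨v, hv, hcv, hvu, hv_lower, hu_lower⟩ }
  exact ⟨⟨c.lim, c.continuous_lim⟩, c.monotone_lim, c.lim_of_mem_C,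
    fun x hx => c.lim_of_notMem_U _ fun h => h (subset_upperClosure hx), c.lim_mem_Icc⟩

theorem exists_monotone_unitInterval_eqOn_ne_of_notMem {M : Set X} (hM : IsClosed M) {y : X}
    (hy : y ∉ M) :
    ∃ g₁ g₂ : X → unitInterval, Continuous g₁ ∧ Monotone g₁ ∧ Continuous g₂ ∧ Monotone g₂ ∧
      EqOn g₁ g₂ M ∧ g₁ y ≠ g₂ y := by
  obtain ⟨ψ, hψ_mono, hψ0, hψ1, hψI⟩ := exists_continuous_monotone_zero_one_of_isClosed
    (isClosed_singleton (x := y)) (hM.inter isClosed_Ici) <| by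
      rintro _ rfl b ⟨hbM, hyb⟩ hby
      exact hy (le_antisymm hby hyb ▸ hbM)
  obtain ⟨θ, hθ_mono, hθ0, hθ1, hθI⟩ := exists_continuous_monotone_zero_one_of_isClosed
    (hM.inter (isClosed_le ψ.continuous continuous_const) : IsClosed (M ∩ {z | ψ z ≤ 1 / 2}))
    isClosed_singleton <| by
      rintro a ⟨haM, ha : ψ a ≤ 1 / 2⟩ _ rfl hya
      have : ψ a = 1 := hψ1 ⟨haM, hya⟩
      linarith
  have hθψ : ∀ z ∈ M, θ z / 2 ≤ ψ z := by
    intro z hz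
    rcases le_or_gt (ψ z) (1 / 2) with h | h
    · rw [hθ0 ⟨hz, h⟩, Pi.zero_apply, zero_div]
      exact (hψI z).1
    · linarith [(hθI z).2]
  have hmaxI : ∀ z, max (ψ z) (θ z / 2) ∈ unitInterval := fun z =>
    ⟨le_max_of_le_left (hψI z).1, max_le (hψI z).2 (by linarith [(hθI z).2])⟩
  refine ⟨codRestrict ψ _ hψI, codRestrict _ _ hmaxI, ψ.continuous.codRestrict hψI,
    hψ_mono.codRestrict hψI, (ψ.continuous.max (θ.continuous.div_const 2)).codRestrict hmaxI,
    (hψ_mono.max fun a b hab => by linarith [hθ_mono hab]).codRestrict hmaxI,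
    fun z hz => Subtype.ext (max_eq_left (hθψ z hz)).symm, fun h => ?_⟩
  have := congrArg Subtype.val h
  simp [hψ0 rfl, hθ1 rfl] at this

end CompactPospace

theorem surjective_iff_epi_general {X Y : Type*}
    [TopologicalSpace X] [CompactSpace X]
    [TopologicalSpace Y] [CompactSpace Y] [PartialOrder Y] [OrderClosedTopology Y]
    {f : X → Y} (hfc : Continuous f) :
    Function.Surjective f ↔
      ∀ g₁ g₂ : Y → unitInterval, Continuous g₁ → Monotone g₁ →
        Continuous g₂ → Monotone g₂ → g₁ ∘ f = g₂ ∘ f → g₁ = g₂ := by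
  refine ⟨fun hf g₁ g₂ _ _ _ _ h => hf.injective_comp_right h, fun H y => ?_⟩
  by_contra hy
  obtain ⟨g₁, g₂, hg₁c, hg₁m, hg₂c, hg₂m, hM, hne⟩ :=
    exists_monotone_unitInterval_eqOn_ne_of_notMem (isCompact_range hfc).isClosed
      (y := y) (by simpa [mem_range] using hy)
  exact hne (congrFun (H g₁ g₂ hg₁c hg₁m hg₂c hg₂m (funext fun x => hM (mem_range_self x))) y)

/-- A continuous monotone map between compact ordered spaces is surjective iff it is an
epimorphism with respect to continuous monotone maps into `[0,1]`. -/
theorem surjective_iff_epi {X Y : Type*}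
    [TopologicalSpace X] [CompactSpace X] [PartialOrder X] [OrderClosedTopology X]
    [TopologicalSpace Y] [CompactSpace Y] [PartialOrder Y] [OrderClosedTopology Y]
    {f : X → Y} (hfc : Continuous f) (hfm : Monotone f) :
    Function.Surjective f ↔
      ∀ g₁ g₂ : Y → unitInterval, Continuous g₁ → Monotone g₁ →
        Continuous g₂ → Monotone g₂ → g₁ ∘ f = g₂ ∘ f → g₁ = g₂ :=
  surjective_iff_epi_general hfc
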